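/- Let λ₁ ≥ ⋯ ≥ λ_k > 0 with k ≥ 2 and σ > 0. Then (∏_{l=1}^k (λ_l+σ²))^{1/k} · ( ∑_{l=1}^k λ_l/(λ_l+σ²)² − k(∏_{l=1}^k λ_l/(λ_l+σ²)²)^{1/k} ) ≥ (λ_k+σ²) · ( max_{l≤k} √λ_l/(λ_l+σ²) − min_{l≤k} √λ_l/(λ_l+σ²) )². -/

import Mathlib

/-!
Write `a_l = λ_l / (λ_l + σ²)²`, so that `√a_l = √λ_l / (λ_l + σ²)`. Tung's bound: replacing the
largest and smallest `a_l` by their geometric mean keeps the product and lowers the sum by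
`(√max a - √min a)²`, so by AM–GM this square is at most the AM–GM gap `∑ a - k (∏ a)^{1/k}`.
Since the `λ_l` decrease, every `λ_l + σ²` is at least `λ_k + σ²`, which therefore bounds the
geometric mean of the `λ_l + σ²` from below.
-/

open Finset Real

noncomputable def amgmGap {ι : Type*} [Fintype ι] (a : ι → ℝ) : ℝ :=
  ∑ i, a i - Fintype.card ι * (∏ i, a i) ^ ((1 : ℝ) / Fintype.card ι)

section AMGM

variable {ι : Type*} [Fintype ι]

theorem amgmGap_nonneg {a : ι → ℝ} (ha : ∀ i, 0 ≤ a i) : 0 ≤ amgmGap a := by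
  rcases isEmpty_or_nonempty ι with hι | hι
  · simp [amgmGap]
  have hcard : (0 : ℝ) < Fintype.card ι := by exact_mod_cast Fintype.card_pos
  have h := geom_mean_le_arith_mean univ (fun _ => 1) a (fun _ _ => zero_le_one)
    (by simpa using hcard) (fun i _ => ha i)
  simp only [rpow_one, one_mul, sum_const, card_univ, nsmul_eq_mul, mul_one] at h
  rw [amgmGap, sub_nonneg, one_div]
  rwa [le_div_iff₀' hcard] at h

theorem sq_sqrt_sub_sqrt_le_amgmGap {a : ι → ℝ} (ha : ∀ i, 0 ≤ a i) (i j : ι) :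
    (√(a i) - √(a j)) ^ 2 ≤ amgmGap a := by
  classical
  rcases eq_or_ne i j with rfl | hij
  · simpa using amgmGap_nonneg ha
  set g := √(a i * a j)
  set b : ι → ℝ := fun l => if l = i ∨ l = j then g else a l
  have hb : ∀ l, 0 ≤ b l := fun l => by
    by_cases h : l = i ∨ l = j <;> simp only [b, h, if_true, if_false, ha l, g, sqrt_nonneg]
  have hb_compl : ∀ l ∈ ({i, j} : Finset ι)ᶜ, b l = a l := fun l hl => by
    simp only [mem_compl, mem_insert, mem_singleton, not_or] at hl
    simp [b, hl.1, hl.2]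
  have hprod : ∏ l, b l = ∏ l, a l := by
    rw [← prod_mul_prod_compl {i, j}, ← prod_mul_prod_compl {i, j} a, prod_congr rfl hb_compl,
      prod_pair hij, prod_pair hij]
    simp [b, g, mul_self_sqrt (mul_nonneg (ha i) (ha j))]
  have hsum : ∑ l, a l = ∑ l, b l + (√(a i) - √(a j)) ^ 2 := by
    rw [← sum_add_sum_compl {i, j}, ← sum_add_sum_compl {i, j} b, sum_congr rfl hb_compl,
      sum_pair hij, sum_pair hij]
    simp only [b, g, true_or, or_true, if_true, sqrt_mul (ha i)]
    nlinarith [sq_sqrt (ha i), sq_sqrt (ha j)]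
  have hgap : amgmGap a = amgmGap b + (√(a i) - √(a j)) ^ 2 := by
    rw [amgmGap, amgmGap, hsum, hprod]
    ring
  linarith [amgmGap_nonneg hb]

theorem sq_sup'_sqrt_sub_inf'_sqrt_le_amgmGap {a : ι → ℝ} (ha : ∀ i, 0 ≤ a i)
    (hne : (univ : Finset ι).Nonempty) :
    (univ.sup' hne (fun i => √(a i)) - univ.inf' hne (fun i => √(a i))) ^ 2 ≤ amgmGap a := by
  obtain ⟨i, -, hi⟩ := exists_mem_eq_sup' hne fun i => √(a i)
  obtain ⟨j, -, hj⟩ := exists_mem_eq_inf' hne fun i => √(a i)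
  rw [hi, hj]
  exact sq_sqrt_sub_sqrt_le_amgmGap ha i j

theorem le_prod_rpow_one_div_card [Nonempty ι] {x : ι → ℝ} {c : ℝ} (hc : 0 ≤ c)
    (hx : ∀ i, c ≤ x i) : c ≤ (∏ i, x i) ^ ((1 : ℝ) / Fintype.card ι) := by
  have hcard : Fintype.card ι ≠ 0 := Fintype.card_ne_zero
  calc c = (c ^ Fintype.card ι) ^ ((1 : ℝ) / Fintype.card ι) := by
        rw [one_div, pow_rpow_inv_natCast hc hcard]
    _ ≤ (∏ i, x i) ^ ((1 : ℝ) / Fintype.card ι) := by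
        gcongr
        calc c ^ Fintype.card ι = ∏ _i : ι, c := by simp
          _ ≤ ∏ i, x i := prod_le_prod (fun _ _ => hc) fun i _ => hx i

end AMGM

theorem stmt_10 (σ : ℝ) (k : ℕ) (hk : 2 ≤ k) (lam : Fin k → ℝ)
    (hpos : ∀ l, 0 < lam l) (hdesc : ∀ i j : Fin k, i ≤ j → lam j ≤ lam i) :
    (∏ l, (lam l + σ^2)) ^ ((1 : ℝ) / k) *
      (∑ l, lam l / (lam l + σ^2)^2 -
        (k : ℝ) * (∏ l, lam l / (lam l + σ^2)^2) ^ ((1 : ℝ) / k)) ≥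
    (lam ⟨k - 1, by omega⟩ + σ^2) *
      (Finset.univ.sup' (⟨⟨0, by omega⟩, Finset.mem_univ _⟩)
          (fun l => Real.sqrt (lam l) / (lam l + σ^2)) -
       Finset.univ.inf' (⟨⟨0, by omega⟩, Finset.mem_univ _⟩)
          (fun l => Real.sqrt (lam l) / (lam l + σ^2)))^2 := by
  have : Nonempty (Fin k) := ⟨⟨0, by omega⟩⟩
  have hden : ∀ l, 0 ≤ lam l + σ ^ 2 := fun l => by linarith [hpos l, sq_nonneg σ]
  set a : Fin k → ℝ := fun l => lam l / (lam l + σ ^ 2) ^ 2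
  have hsqrt : (fun l => √(lam l) / (lam l + σ ^ 2)) = fun l => √(a l) := by
    funext l
    rw [sqrt_div' _ (sq_nonneg _), sqrt_sq (hden l)]
  have hgap := sq_sup'_sqrt_sub_inf'_sqrt_le_amgmGap (a := a)
    (fun l => div_nonneg (hpos l).le (sq_nonneg _)) univ_nonempty
  have hgeo : lam ⟨k - 1, by omega⟩ + σ ^ 2 ≤ (∏ l, (lam l + σ ^ 2)) ^ ((1 : ℝ) / k) := by
    simpa using le_prod_rpow_one_div_card (hden _) fun l =>
      add_le_add_left (hdesc l _ (Fin.le_iff_val_le_val.mpr (by simp; omega))) _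
  rw [ge_iff_le, hsqrt]
  simp only [amgmGap, Fintype.card_fin] at hgap
  exact mul_le_mul hgeo hgap (sq_nonneg _) ((hden _).trans hgeo)
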